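/- arXiv:1303.6867 — 7 statements merged into one kernel-verified Lean document; each statement's English description precedes it below -/
import Mathlib

section
/- Let G=(V,E) be a graph on n vertices, π a 2-partition of V, F⊆V, and F̄=V∖F. Then the profit of flipping F satisfies Δ(F) = 4·c_π(F,F̄) − 2|F||F̄|. -/
/-!
Flipping `F` keeps the conflict status of every pair of vertices on the same side of the cut
`(F, F̄)` and toggles it for every pair across the cut. So the blocks `F × F` and `F̄ × F̄` of
`h₁ = c_π(V, V)` do not change, while each of the two cross blocks, which are equal by symmetry
of conflicts, goes from `c_π(F, F̄)` to `|F||F̄| - c_π(F, F̄)`.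
-/

open Finset

variable {V : Type*} [Fintype V] [DecidableEq V]

/-- A 2-partition of the vertex set is given by an indicator `π : V → Bool`
(the two clusters are the preimages of `true` and `false`).
Two vertices `u ≠ v` are in conflict if they are in the same cluster but not adjacent,
or in different clusters but adjacent. -/
def Conflict (G : SimpleGraph V) (π : V → Bool) (u v : V) : Prop :=
  u ≠ v ∧ ((π u = π v) ↔ ¬ G.Adj u v)

instance (G : SimpleGraph V) [DecidableRel G.Adj] (π : V → Bool) (u v : V) :
    Decidable (Conflict G π u v) := by
  unfold Conflict; infer_instance

/-- `C_π(v)` : the set of vertices in conflict with `v`. -/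
def conflictSet (G : SimpleGraph V) [DecidableRel G.Adj] (π : V → Bool) (v : V) : Finset V :=
  Finset.univ.filter (fun u => Conflict G π v u)

/-- `c_π(v)` : the conflict number of `v`. -/
def cNum (G : SimpleGraph V) [DecidableRel G.Adj] (π : V → Bool) (v : V) : ℕ :=
  (conflictSet G π v).card

/-- Flipping the set `F` : moving every vertex of `F` to the other cluster. -/
def flipSet (π : V → Bool) (F : Finset V) : V → Bool :=
  fun v => if v ∈ F then !(π v) else π v

/-- `h₁(π)` : the total conflict number. -/
def h1 (G : SimpleGraph V) [DecidableRel G.Adj] (π : V → Bool) : ℕ :=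
  ∑ v, cNum G π v

/-- `h₂(π)` : the sum of squared conflict numbers. -/
def h2 (G : SimpleGraph V) [DecidableRel G.Adj] (π : V → Bool) : ℕ :=
  ∑ v, (cNum G π v) ^ 2

theorem conflict_comm {α : Type*} (G : SimpleGraph α) (π : α → Bool) (u v : α) :
    Conflict G π u v ↔ Conflict G π v u := by
  simp only [Conflict, ne_comm, eq_comm, G.adj_comm]

theorem flipSet_eq_flipSet_iff {α : Type*} [DecidableEq α] (π : α → Bool) (F : Finset α)
    (u v : α) : flipSet π F u = flipSet π F v ↔ (π u = π v ↔ (u ∈ F ↔ v ∈ F)) := by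
  unfold flipSet
  by_cases hu : u ∈ F <;> by_cases hv : v ∈ F <;> cases π u <;> cases π v <;> simp [hu, hv]

theorem conflict_flipSet_iff_of_mem_iff {α : Type*} [DecidableEq α] (G : SimpleGraph α)
    (π : α → Bool) {F : Finset α} {u v : α} (h : u ∈ F ↔ v ∈ F) :
    Conflict G (flipSet π F) u v ↔ Conflict G π u v := by
  simp only [Conflict, flipSet_eq_flipSet_iff, h, iff_true]

theorem conflict_flipSet_iff_not_of_not_mem_iff {α : Type*} [DecidableEq α] (G : SimpleGraph α)
    (π : α → Bool) {F : Finset α} {u v : α} (h : ¬(u ∈ F ↔ v ∈ F)) :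
    Conflict G (flipSet π F) u v ↔ ¬Conflict G π u v := by
  have hne : u ≠ v := by rintro rfl; exact h Iff.rfl
  simp only [Conflict, flipSet_eq_flipSet_iff, h, iff_false]
  tauto

section conflictCount

variable (G : SimpleGraph V) [DecidableRel G.Adj] (π : V → Bool)

/-- `c_π(S, T)`. -/
def conflictCount (S T : Finset V) : ℕ :=
  ∑ v ∈ S, (conflictSet G π v ∩ T).card

theorem conflictCount_eq_sum_sum_ite (S T : Finset V) :
    conflictCount G π S T = ∑ u ∈ S, ∑ v ∈ T, if Conflict G π u v then 1 else 0 := by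
  refine Finset.sum_congr rfl fun u _ => ?_
  rw [← Finset.card_filter, conflictSet, Finset.filter_inter, Finset.univ_inter]

theorem conflictCount_comm (S T : Finset V) :
    conflictCount G π S T = conflictCount G π T S := by
  rw [conflictCount_eq_sum_sum_ite, conflictCount_eq_sum_sum_ite, Finset.sum_comm]
  exact Finset.sum_congr rfl fun u _ => Finset.sum_congr rfl fun v _ =>
    if_congr (conflict_comm G π v u) rfl rfl

theorem conflictCount_add_conflictCount_compl_left (S T : Finset V) :
    conflictCount G π S T + conflictCount G π Sᶜ T = conflictCount G π univ T :=
  Finset.sum_add_sum_compl S _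

theorem conflictCount_add_conflictCount_compl_right (S T : Finset V) :
    conflictCount G π S T + conflictCount G π S Tᶜ = conflictCount G π S univ := by
  simp only [conflictCount_eq_sum_sum_ite, ← Finset.sum_add_distrib, Finset.sum_add_sum_compl]

theorem h1_eq_conflictCount_univ : h1 G π = conflictCount G π univ univ := by
  simp only [h1, cNum, conflictCount, Finset.inter_univ]

theorem h1_eq_sum_conflictCount_blocks (F : Finset V) :
    h1 G π = conflictCount G π F F + conflictCount G π F Fᶜ
      + (conflictCount G π Fᶜ F + conflictCount G π Fᶜ Fᶜ) := by
  rw [h1_eq_conflictCount_univ, conflictCount_add_conflictCount_compl_right,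
    conflictCount_add_conflictCount_compl_right, conflictCount_add_conflictCount_compl_left]

theorem conflictCount_flipSet_of_mem_iff (F : Finset V) {S T : Finset V}
    (h : ∀ u ∈ S, ∀ v ∈ T, (u ∈ F ↔ v ∈ F)) :
    conflictCount G (flipSet π F) S T = conflictCount G π S T := by
  simp only [conflictCount_eq_sum_sum_ite]
  refine Finset.sum_congr rfl fun u hu => Finset.sum_congr rfl fun v hv => ?_
  exact if_congr (conflict_flipSet_iff_of_mem_iff G π (h u hu v hv)) rfl rfl

theorem conflictCount_flipSet_add_conflictCount_of_not_mem_iff (F : Finset V) {S T : Finset V}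
    (h : ∀ u ∈ S, ∀ v ∈ T, ¬(u ∈ F ↔ v ∈ F)) :
    conflictCount G (flipSet π F) S T + conflictCount G π S T = S.card * T.card := by
  simp only [conflictCount_eq_sum_sum_ite, ← Finset.sum_add_distrib]
  rw [← smul_eq_mul, ← Finset.sum_const, Finset.card_eq_sum_ones]
  refine Finset.sum_congr rfl fun u hu => Finset.sum_congr rfl fun v hv => ?_
  rw [if_congr (conflict_flipSet_iff_not_of_not_mem_iff G π (h u hu v hv)) rfl rfl]
  split_ifs <;> rfl

end conflictCount

/-- Lemma 1: the profit of flipping `F` satisfies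
`Δ(F) = 4·c_π(F, F̄) − 2·|F|·|F̄|`, where `F̄ = V ∖ F`. -/
theorem profit_flip_eq (G : SimpleGraph V) [DecidableRel G.Adj] (π : V → Bool) (F : Finset V) :
    (h1 G π : ℤ) - (h1 G (flipSet π F) : ℤ) =
      4 * (∑ v ∈ F, ((conflictSet G π v ∩ Fᶜ).card : ℤ)) - 2 * F.card * Fᶜ.card := by
  have hin := conflictCount_flipSet_of_mem_iff G π F (S := F) (T := F) fun u hu v hv => by
    simp [hu, hv]
  have hout := conflictCount_flipSet_of_mem_iff G π F (S := Fᶜ) (T := Fᶜ) fun u hu v hv => by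
    simp_all
  have hcross := conflictCount_flipSet_add_conflictCount_of_not_mem_iff G π F
    (S := F) (T := Fᶜ) fun u hu v hv => by simp_all
  have hcount : ∑ v ∈ F, ((conflictSet G π v ∩ Fᶜ).card : ℤ) = conflictCount G π F Fᶜ := by
    simp [conflictCount]
  rw [h1_eq_sum_conflictCount_blocks G π F, h1_eq_sum_conflictCount_blocks G (flipSet π F) F,
    conflictCount_comm G π Fᶜ F, conflictCount_comm G (flipSet π F) Fᶜ F, hin, hout, hcount]
  push_cast
  linarith [congrArg (Nat.cast (R := ℤ)) hcross]
end

section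
/- (Correctness of reduction rule R1) Let G=(V,E) be a graph, π a 2-partition of V, and K,t,f nonnegative integers. If v∈V satisfies c_π(v) > t+f, then every (K,t)-feasible flipping set F for π with |F| ≤ f must contain v. Equivalently: if |F| ≤ f and v∉F, then c_{π⊖F}(v) > t. -/
open Finset

variable {V : Type*} [Fintype V] [DecidableEq V]

/-! Flipping `F` moves only the vertices of `F`, so a vertex `v ∉ F` keeps every conflict
with a vertex outside `F`; it loses at most `|F|` conflicts, and `c_π(v) > t + f` leaves
more than `t` of them. -/

theorem conflictSet_sdiff_subset_conflictSet_flipSet (G : SimpleGraph V) [DecidableRel G.Adj]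
    (π : V → Bool) {F : Finset V} {v : V} (hv : v ∉ F) :
    conflictSet G π v \ F ⊆ conflictSet G (flipSet π F) v := by
  intro u hu
  obtain ⟨huC, huF⟩ := mem_sdiff.mp hu
  simp only [conflictSet, mem_filter, mem_univ, true_and] at huC ⊢
  simpa only [Conflict, flipSet, if_neg hv, if_neg huF] using huC

theorem cNum_sub_card_le_cNum_flipSet (G : SimpleGraph V) [DecidableRel G.Adj]
    (π : V → Bool) {F : Finset V} {v : V} (hv : v ∉ F) :
    cNum G π v - #F ≤ cNum G (flipSet π F) v :=
  (le_card_sdiff F _).trans (card_le_card (conflictSet_sdiff_subset_conflictSet_flipSet G π hv))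

/-- correctness of rule R1: if `c_π(v) > t + f`, then every
`(K,t)`-feasible flipping set of size at most `f` must contain `v`; equivalently,
if `|F| ≤ f` and `v ∉ F`, then `c_{π⊖F}(v) > t` (so `F` is not `(K,t)`-feasible). -/
theorem rule_R1 (G : SimpleGraph V) [DecidableRel G.Adj] (π : V → Bool) (t f : ℕ)
    (v : V) (hv : cNum G π v > t + f)
    (F : Finset V) (hF : F.card ≤ f) (hvF : v ∉ F) :
    cNum G (flipSet π F) v > t := by
  have := cNum_sub_card_le_cNum_flipSet G π hvF
  omega
end

section
/- (Correctness of reduction rule R2) Let G=(V,E) be a graph on n vertices, π a 2-partition of V, and K,t,f nonnegative integers. If v∈V satisfies c_π(v) < n−t−f, then v cannot belong to any (K,t)-feasible flipping set F for π with |F| ≤ f. Equivalently: if |F| ≤ f and v∈F, then c_{π⊖F}(v) > t. -/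
open Finset

variable {V : Type*} [Fintype V] [DecidableEq V]

lemma compl_union_conflictSet_subset_conflictSet_flipSet (G : SimpleGraph V) [DecidableRel G.Adj]
    (π : V → Bool) {F : Finset V} {v : V} (hv : v ∈ F) :
    (F ∪ conflictSet G π v)ᶜ ⊆ conflictSet G (flipSet π F) v := by
  intro u hu
  simp only [mem_compl, mem_union, not_or, conflictSet, mem_filter, mem_univ, true_and] at hu ⊢
  obtain ⟨huF, hnc⟩ := hu
  have hne : v ≠ u := fun h => huF (h ▸ hv)
  -- only `v` changes side, so the pair's conflict status toggles
  simp only [Conflict, flipSet, hv, huF, if_true, if_false, ne_eq, hne, not_false_eq_true,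
    true_and] at hnc ⊢
  revert hnc
  cases π v <;> cases π u <;> simp

lemma card_sub_card_sub_cNum_le_cNum_flipSet (G : SimpleGraph V) [DecidableRel G.Adj]
    (π : V → Bool) {F : Finset V} {v : V} (hv : v ∈ F) :
    Fintype.card V - F.card - cNum G π v ≤ cNum G (flipSet π F) v :=
  calc Fintype.card V - F.card - cNum G π v
      ≤ Fintype.card V - (F ∪ conflictSet G π v).card := by
        have := card_union_le F (conflictSet G π v)
        unfold cNum
        omega
    _ = (F ∪ conflictSet G π v)ᶜ.card := (card_compl _).symm
    _ ≤ cNum G (flipSet π F) v :=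
        card_le_card (compl_union_conflictSet_subset_conflictSet_flipSet G π hv)

/-- correctness of rule R2: if `c_π(v) < n − t − f`, then `v` cannot be in
any `(K,t)`-feasible flipping set of size at most `f`; equivalently,
if `|F| ≤ f` and `v ∈ F`, then `c_{π⊖F}(v) > t` (so `F` is not `(K,t)`-feasible). -/
theorem rule_R2 (G : SimpleGraph V) [DecidableRel G.Adj] (π : V → Bool) (t f : ℕ)
    (v : V) (hv : (cNum G π v : ℤ) < (Fintype.card V : ℤ) - t - f)
    (F : Finset V) (hF : F.card ≤ f) (hvF : v ∈ F) :
    cNum G (flipSet π F) v > t := by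
  have := card_sub_card_sub_cNum_le_cNum_flipSet G π hvF
  omega
end

section
/- (Kernel bound, rule R3) Let G=(V,E) be a graph on n vertices, π a 2-partition of V, and K,t,f nonnegative integers with t+2f < n. Suppose c_π(v) ≤ t+f for all v∈V, and let U = {v∈V : c_π(v) ≥ n−t−f}. If there exists a (K,t)-feasible flipping set F ⊆ U for π with |F| = f, then |U| ≤ K/(n−t−2f) − f. -/
open Finset

variable {V : Type*} [Fintype V] [DecidableEq V]

/-!
Let `π' = π ⊖ F` and `d = n - t - 2f`. Every vertex of `U` has at least `d` conflicts in `π'`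
with vertices outside `F`: a vertex of `U \ F` keeps its conflicts outside `F`, of which there
are at least `(n - t - f) - f`, and a vertex of `F` now conflicts with each vertex outside `F`
it did not conflict with before, of which there are at least `(n - f) - (t + f)`. A conflict
between `F` and its complement is counted at both of its endpoints in `h₁(π')`, so
`K ≥ h₁(π') ≥ (|U| - f) d + 2 f d = (|U| + f) d`.
-/

namespace TwoPartition

variable {α : Type*} {G : SimpleGraph α} {σ π : α → Bool} {u v w : α}

theorem conflict_comm : Conflict G σ u v ↔ Conflict G σ v u := by
  unfold Conflict
  rw [ne_comm, eq_comm, G.adj_comm]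

variable [DecidableEq α] {F : Finset α}

theorem conflict_flipSet_of_notMem (hu : u ∉ F) (hw : w ∉ F) :
    Conflict G (flipSet π F) u w ↔ Conflict G π u w := by
  simp [Conflict, flipSet, hu, hw]

theorem conflict_flipSet_of_mem_of_notMem (hv : v ∈ F) (hw : w ∉ F) :
    Conflict G (flipSet π F) v w ↔ ¬ Conflict G π v w := by
  have hvw : v ≠ w := ne_of_mem_of_not_mem hv hw
  simp only [Conflict, flipSet, hv, hw, if_true, if_false, ne_eq, hvw, not_false_eq_true,
    true_and]
  cases π v <;> cases π w <;> simp

variable [Fintype α] [DecidableRel G.Adj]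

theorem conflictSet_inter (A : Finset α) :
    conflictSet G σ u ∩ A = A.bipartiteAbove (Conflict G σ) u := by
  ext w
  simp [conflictSet, Finset.bipartiteAbove, and_comm]

theorem sum_card_conflictSet_inter_comm (A B : Finset α) :
    ∑ u ∈ B, #(conflictSet G σ u ∩ A) = ∑ v ∈ A, #(conflictSet G σ v ∩ B) := by
  simp only [conflictSet_inter]
  rw [sum_card_bipartiteAbove_eq_sum_card_bipartiteBelow]
  exact sum_congr rfl fun v _ => congrArg card (filter_congr fun u _ => conflict_comm)

theorem sum_compl_add_two_mul_sum_le_h1 (σ : α → Bool) (F : Finset α) :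
    ∑ u ∈ Fᶜ, #(conflictSet G σ u \ F) + 2 * ∑ v ∈ F, #(conflictSet G σ v \ F)
      ≤ h1 G σ := by
  have hcross : ∑ u ∈ Fᶜ, #(conflictSet G σ u ∩ F) = ∑ v ∈ F, #(conflictSet G σ v \ F) := by
    simp only [sum_card_conflictSet_inter_comm F Fᶜ, sdiff_eq_inter_compl]
  have hsplit : ∀ u, #(conflictSet G σ u \ F) + #(conflictSet G σ u ∩ F) = cNum G σ u :=
    fun u => card_sdiff_add_card_inter _ _
  have hF : ∑ v ∈ F, #(conflictSet G σ v \ F) ≤ ∑ v ∈ F, cNum G σ v :=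
    sum_le_sum fun v _ => (Nat.le_add_right _ _).trans (hsplit v).le
  rw [h1, ← sum_compl_add_sum F, ← hcross]
  simp only [← hsplit, sum_add_distrib] at hF ⊢
  omega

theorem cNum_sub_card_le_card_conflictSet_flipSet_sdiff (hu : u ∉ F) :
    cNum G π u - #F ≤ #(conflictSet G (flipSet π F) u \ F) := by
  have : conflictSet G (flipSet π F) u \ F = conflictSet G π u \ F := by
    ext w
    by_cases hw : w ∈ F
    · simp [hw]
    · simp [conflictSet, hw, conflict_flipSet_of_notMem hu hw]
  rw [this]
  exact le_card_sdiff _ _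

theorem card_sub_cNum_le_card_conflictSet_flipSet_sdiff (hv : v ∈ F) :
    Fintype.card α - #F - cNum G π v ≤ #(conflictSet G (flipSet π F) v \ F) := by
  have : conflictSet G (flipSet π F) v \ F = Fᶜ \ conflictSet G π v := by
    ext w
    by_cases hw : w ∈ F
    · simp [hw]
    · simp [conflictSet, hw, conflict_flipSet_of_mem_of_notMem hv hw]
  rw [this, ← card_compl]
  exact le_card_sdiff _ _

theorem card_add_card_mul_le_h1 {U : Finset α} {d : ℕ} (hFU : F ⊆ U)
    (hout : ∀ u ∈ U, d ≤ #(conflictSet G σ u \ F)) :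
    (#U + #F) * d ≤ h1 G σ := by
  have hUF : ∑ u ∈ U \ F, d ≤ ∑ u ∈ Fᶜ, #(conflictSet G σ u \ F) :=
    calc ∑ u ∈ U \ F, d ≤ ∑ u ∈ U \ F, #(conflictSet G σ u \ F) :=
          sum_le_sum fun u hu => hout u (sdiff_subset hu)
      _ ≤ ∑ u ∈ Fᶜ, #(conflictSet G σ u \ F) :=
          sum_le_sum_of_subset fun u hu => mem_compl.2 (mem_sdiff.1 hu).2
  have hF : ∑ v ∈ F, d ≤ ∑ v ∈ F, #(conflictSet G σ v \ F) :=
    sum_le_sum fun v hv => hout v (hFU hv)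
  have hcard := card_sdiff_add_card_eq_card hFU
  have hh1 := sum_compl_add_two_mul_sum_le_h1 (G := G) σ F
  simp only [sum_const, smul_eq_mul] at hUF hF
  calc (#U + #F) * d = #(U \ F) * d + 2 * (#F * d) := by rw [← hcard]; ring
    _ ≤ h1 G σ := by omega

end TwoPartition

open TwoPartition in
/-- Lemma 4, kernel bound for rule R3: suppose `t + 2f < n` and
`c_π(v) ≤ t + f` for all `v`. If there exists a `(K,t)`-feasible flipping set `F ⊆ U`
of size exactly `f`, where `U = {v : c_π(v) ≥ n − t − f}`, then
`|U| ≤ K/(n − t − 2f) − f`. -/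
theorem rule_R3_kernel_bound (G : SimpleGraph V) [DecidableRel G.Adj] (π : V → Bool)
    (K t f : ℕ) (hn : t + 2 * f < Fintype.card V)
    (hall : ∀ v : V, cNum G π v ≤ t + f)
    (U : Finset V)
    (hU : U = Finset.univ.filter
      (fun v => (Fintype.card V : ℤ) - t - f ≤ (cNum G π v : ℤ)))
    (F : Finset V) (hFU : F ⊆ U) (hFcard : F.card = f)
    (hfeas : h1 G (flipSet π F) ≤ K ∧ ∀ v : V, cNum G (flipSet π F) v ≤ t) :
    (U.card : ℝ) ≤ (K : ℝ) / ((Fintype.card V : ℝ) - t - 2 * f) - f := by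
  set d := Fintype.card V - (t + 2 * f)
  have hout : ∀ u ∈ U, d ≤ #(conflictSet G (flipSet π F) u \ F) := by
    intro u hu
    by_cases huF : u ∈ F
    · have := card_sub_cNum_le_card_conflictSet_flipSet_sdiff (G := G) (π := π) huF
      have := hall u
      omega
    · have := cNum_sub_card_le_card_conflictSet_flipSet_sdiff (G := G) (π := π) huF
      rw [hU, mem_filter] at hu
      omega
  have hdK : (#U + f) * d ≤ K := hFcard ▸ (card_add_card_mul_le_h1 hFU hout).trans hfeas.1
  have hd : ((Fintype.card V : ℝ) - t - 2 * f) = d := by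
    push_cast [d, Nat.cast_sub hn.le]
    ring
  have hdpos : (0 : ℝ) < d := by exact_mod_cast Nat.sub_pos_of_lt hn
  rw [hd, le_sub_iff_add_le, le_div_iff₀ hdpos]
  exact_mod_cast hdK
end

section
/- Let G=(V,E) be a graph on n vertices and π a 2-partition of V such that h₁(π) ≤ h₁(π⊖v) for every vertex v. Then c_π(v) ≤ (n−1)/2 for every vertex v. -/
open Finset

variable {V : Type*} [Fintype V] [DecidableEq V]

set_option linter.unusedSectionVars false

lemma bool_not_eq (a b : Bool) : ((!a) = b) ↔ ¬ (a = b) := by cases a <;> cases b <;> simp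

lemma conflict_symm (G : SimpleGraph V) (π : V → Bool) (u w : V) :
    Conflict G π u w ↔ Conflict G π w u := by
  unfold Conflict
  rw [eq_comm, ne_comm, G.adj_comm]

lemma flip_at (π : V → Bool) (v : V) : flipSet π {v} v = !(π v) := by
  simp [flipSet]

lemma flip_ne (π : V → Bool) (v u : V) (h : u ≠ v) : flipSet π {v} u = π u := by
  simp [flipSet, h]

lemma conflict_flip_self (G : SimpleGraph V) (π : V → Bool) (v w : V) (hw : w ≠ v) :
    Conflict G (flipSet π {v}) v w ↔ (v ≠ w ∧ ¬ Conflict G π v w) := by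
  unfold Conflict
  rw [flip_at, flip_ne π v w hw, bool_not_eq]
  constructor
  · rintro ⟨h1, h2⟩
    exact ⟨h1, fun h => by tauto⟩
  · rintro ⟨h1, h2⟩
    refine ⟨h1, ?_⟩
    by_cases hA : G.Adj v w <;> by_cases hE : π v = π w <;> tauto

lemma conflict_flip_other (G : SimpleGraph V) (π : V → Bool) (v u w : V)
    (hu : u ≠ v) (hw : w ≠ v) :
    Conflict G (flipSet π {v}) u w ↔ Conflict G π u w := by
  unfold Conflict
  rw [flip_ne π v u hu, flip_ne π v w hw]

lemma cNum_flip_self (G : SimpleGraph V) [DecidableRel G.Adj] (π : V → Bool) (v : V) :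
    cNum G (flipSet π {v}) v + cNum G π v = Fintype.card V - 1 := by
  unfold cNum
  have e1 : conflictSet G π v = (univ.erase v).filter (fun u => Conflict G π v u) := by
    ext w
    simp only [conflictSet, mem_filter, mem_erase, mem_univ, true_and, and_true]
    exact ⟨fun h => ⟨Ne.symm h.1, h⟩, fun h => h.2⟩
  have e2 : conflictSet G (flipSet π {v}) v
      = (univ.erase v).filter (fun u => ¬ Conflict G π v u) := by
    ext w
    simp only [conflictSet, mem_filter, mem_erase, mem_univ, true_and, and_true]
    constructor
    · intro h
      have hw : w ≠ v := Ne.symm h.1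
      rw [conflict_flip_self G π v w hw] at h
      exact ⟨hw, h.2⟩
    · rintro ⟨hw, h⟩
      rw [conflict_flip_self G π v w hw]
      exact ⟨Ne.symm hw, h⟩
  rw [e1, e2, add_comm,
    Finset.card_filter_add_card_filter_not (s := univ.erase v)
      (p := fun u => Conflict G π v u),
    card_erase_of_mem (mem_univ v), card_univ]

lemma cNum_flip_other (G : SimpleGraph V) [DecidableRel G.Adj] (π : V → Bool) (v u : V)
    (hu : u ≠ v) :
    (cNum G (flipSet π {v}) u : ℤ)
      = (cNum G π u : ℤ) + 1 - 2 * (if Conflict G π u v then 1 else 0) := by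
  by_cases hc : Conflict G π u v
  · have e : conflictSet G (flipSet π {v}) u = (conflictSet G π u).erase v := by
      ext w
      simp only [conflictSet, mem_filter, mem_erase, mem_univ, true_and]
      by_cases hw : w = v
      · subst w
        simp only [ne_eq, not_true_eq_false, false_and, iff_false]
        intro h
        rw [conflict_symm, conflict_flip_self G π v u hu] at h
        exact h.2 ((conflict_symm G π u v).mp hc)
      · rw [conflict_flip_other G π v u w hu hw]
        tauto
    have hv : v ∈ conflictSet G π u := by
      simp [conflictSet, hc]
    rw [cNum, e, card_erase_of_mem hv, if_pos hc]
    have : 1 ≤ (conflictSet G π u).card := card_pos.mpr ⟨v, hv⟩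
    push_cast [Nat.cast_sub this]
    unfold cNum
    ring
  · have e : conflictSet G (flipSet π {v}) u = insert v (conflictSet G π u) := by
      ext w
      simp only [conflictSet, mem_insert, mem_filter, mem_univ, true_and]
      by_cases hw : w = v
      · subst w
        simp only [true_or, iff_true]
        rw [conflict_symm, conflict_flip_self G π v u hu]
        exact ⟨Ne.symm hu, fun h => hc ((conflict_symm G π v u).mp h)⟩
      · rw [conflict_flip_other G π v u w hu hw]
        simp [hw]
    have hv : v ∉ conflictSet G π u := by
      simp [conflictSet, hc]
    rw [cNum, e, card_insert_of_notMem hv, if_neg hc]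
    push_cast
    unfold cNum
    ring

lemma h1_flip (G : SimpleGraph V) [DecidableRel G.Adj] (π : V → Bool) (v : V) :
    (h1 G (flipSet π {v}) : ℤ) + 4 * cNum G π v
      = (h1 G π : ℤ) + 2 * ((Fintype.card V : ℤ) - 1) := by
  have hn : 1 ≤ Fintype.card V := Fintype.card_pos_iff.mpr ⟨v⟩
  have hsplit : ∀ (τ : V → Bool), (h1 G τ : ℤ)
      = (cNum G τ v : ℤ) + ∑ u ∈ univ.erase v, (cNum G τ u : ℤ) := by
    intro τ
    rw [h1]
    push_cast
    rw [← Finset.add_sum_erase _ _ (mem_univ v)]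
  have hself : (cNum G (flipSet π {v}) v : ℤ) + (cNum G π v : ℤ)
      = (Fintype.card V : ℤ) - 1 := by
    have := cNum_flip_self G π v
    have := congrArg (Nat.cast (R := ℤ)) this
    push_cast [Nat.cast_sub hn] at this
    linarith
  have hsum : ∑ u ∈ univ.erase v, (cNum G (flipSet π {v}) u : ℤ)
      = ∑ u ∈ univ.erase v,
          ((cNum G π u : ℤ) + 1 - 2 * (if Conflict G π u v then 1 else 0)) := by
    refine Finset.sum_congr rfl fun u hu => ?_
    exact cNum_flip_other G π v u (mem_erase.mp hu).1
  have hind : ∑ u ∈ univ.erase v, (if Conflict G π u v then (1:ℤ) else 0)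
      = (cNum G π v : ℤ) := by
    have e : (univ.erase v).filter (fun u => Conflict G π u v) = conflictSet G π v := by
      ext u
      simp only [mem_filter, mem_erase, mem_univ, true_and, conflictSet, and_true]
      rw [conflict_symm G π u v]
      exact ⟨fun h => h.2, fun h => ⟨Ne.symm h.1, h⟩⟩
    rw [Finset.sum_boole, e, cNum]
  have hcard : ∑ _u ∈ univ.erase v, (1 : ℤ) = (Fintype.card V : ℤ) - 1 := by
    rw [Finset.sum_const, card_erase_of_mem (mem_univ v), card_univ, nsmul_eq_mul, mul_one]
    omega
  rw [hsplit (flipSet π {v}), hsplit π, hsum]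
  rw [Finset.sum_sub_distrib, Finset.sum_add_distrib, hcard, ← Finset.mul_sum, hind]
  linarith

/-- Lemma 6: if `π` is a 2-partition with `h₁(π) ≤ h₁(π ⊖ v)` for every
vertex `v`, then `c_π(v) ≤ (n − 1)/2` for every vertex `v`. -/
theorem cNum_le_of_flip_min (G : SimpleGraph V) [DecidableRel G.Adj] (π : V → Bool)
    (hmin : ∀ v : V, h1 G π ≤ h1 G (flipSet π {v})) :
    ∀ v : V, (cNum G π v : ℝ) ≤ ((Fintype.card V : ℝ) - 1) / 2 := by
  intro v
  have key := h1_flip G π v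
  have hle : (h1 G π : ℤ) ≤ (h1 G (flipSet π {v}) : ℤ) := by exact_mod_cast hmin v
  have h2 : 4 * (cNum G π v : ℤ) ≤ 2 * ((Fintype.card V : ℤ) - 1) := by linarith
  have h3 : 4 * (cNum G π v : ℝ) ≤ 2 * ((Fintype.card V : ℝ) - 1) := by exact_mod_cast h2
  linarith
end

section
/- Let G=(V,E) be a graph on n vertices and π a 2-partition of V such that h₂(π) ≤ h₂(π⊖v) for every vertex v. Then c_π(v) ≤ √(n(n−1)/2) for every vertex v. -/
open Finset

variable {V : Type*} [Fintype V] [DecidableEq V]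

/-!
Let `v` have the largest conflict number `c`. Flipping `v` turns `c(v)` into `n - 1 - c`, lowers
`c(u)` by one for the `c` vertices in conflict with `v` and raises it by one for the other
`n - 1 - c` vertices, whose conflict numbers are at most `c`. Hence `h₂` grows by at most
`(n-1-c)² - c² - c + (2c+1)(n-1-c) = n(n-1) - 2c(c+1)`, which local minimality forces to be `≥ 0`.
-/

section Flip

variable {G : SimpleGraph V} {π : V → Bool}

omit [Fintype V] [DecidableEq V] in
theorem Conflict.symm {u w : V} (h : Conflict G π u w) : Conflict G π w u :=
  ⟨h.1.symm, by rw [eq_comm, G.adj_comm]; exact h.2⟩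

omit [Fintype V] in
theorem conflict_flipSet_iff {F : Finset V} {u w : V} :
    Conflict G (flipSet π F) u w ↔ u ≠ w ∧ (Conflict G π u w ↔ (u ∈ F ↔ w ∈ F)) := by
  unfold Conflict flipSet
  by_cases hu : u ∈ F <;> by_cases hw : w ∈ F <;> cases π u <;> cases π w <;>
    simp [hu, hw] <;> tauto

variable [DecidableRel G.Adj]

theorem mem_conflictSet {u w : V} : w ∈ conflictSet G π u ↔ Conflict G π u w := by
  simp [conflictSet]

theorem conflictSet_subset_erase (v : V) : conflictSet G π v ⊆ univ.erase v :=
  fun _ hu => mem_erase.mpr ⟨(mem_conflictSet.mp hu).1.symm, mem_univ _⟩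

theorem conflictSet_flipSet_singleton_self (v : V) :
    conflictSet G (flipSet π {v}) v = univ.erase v \ conflictSet G π v := by
  ext u
  simp only [mem_conflictSet, conflict_flipSet_iff, mem_sdiff, mem_erase, mem_singleton,
    mem_univ, and_true, true_iff]
  by_cases h : u = v
  · simp [h]
  · simp [h, Ne.symm h]

theorem cNum_flipSet_singleton_of_conflict {u v : V} (h : Conflict G π v u) :
    cNum G (flipSet π {v}) u + 1 = cNum G π u := by
  have hset : conflictSet G (flipSet π {v}) u = (conflictSet G π u).erase v := by
    ext w
    simp only [mem_conflictSet, conflict_flipSet_iff, mem_erase, mem_singleton, h.1.symm]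
    by_cases hw : w = v
    · simp [hw, h.symm]
    · simpa [hw] using fun hc : Conflict G π u w => hc.1
  rw [cNum, cNum, hset, card_erase_add_one (mem_conflictSet.mpr h.symm)]

theorem cNum_flipSet_singleton_of_not_conflict {u v : V} (hu : u ≠ v)
    (h : ¬ Conflict G π v u) : cNum G (flipSet π {v}) u = cNum G π u + 1 := by
  have hset : conflictSet G (flipSet π {v}) u = insert v (conflictSet G π u) := by
    ext w
    simp only [mem_conflictSet, conflict_flipSet_iff, mem_insert, mem_singleton, hu]
    by_cases hw : w = v
    · subst hw
      simpa [hu] using fun hc : Conflict G π u w => h hc.symm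
    · simpa [hw] using fun hc : Conflict G π u w => hc.1
  rw [cNum, cNum, hset, card_insert_of_notMem fun hv => h (mem_conflictSet.mp hv).symm]

end Flip

section LocalMinimum

variable {G : SimpleGraph V} [DecidableRel G.Adj] {π : V → Bool}

theorem two_mul_cNum_mul_succ_le_of_h2_le_flipSet {v : V}
    (hmin : h2 G π ≤ h2 G (flipSet π {v})) (hmax : ∀ u, cNum G π u ≤ cNum G π v) :
    2 * cNum G π v * (cNum G π v + 1) ≤ (Fintype.card V - 1) * Fintype.card V := by
  set c := cNum G π v
  set S := conflictSet G π v
  set T := univ.erase v \ S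
  have hS : S ⊆ univ.erase v := conflictSet_subset_erase v
  have hsplit (f : V → ℕ) : ∑ u, f u = f v + ∑ u ∈ S, f u + ∑ u ∈ T, f u := by
    rw [← add_sum_erase _ _ (mem_univ v), ← sum_sdiff hS, add_assoc, add_comm (∑ u ∈ T, f u)]
  have hcard : #T + c = Fintype.card V - 1 := by
    rw [show c = #S from rfl, card_sdiff_add_card_eq_card hS, card_erase_of_mem (mem_univ v),
      card_univ]
  have hv : cNum G (flipSet π {v}) v = #T := by
    rw [cNum, conflictSet_flipSet_singleton_self]
  have hS_le : ∑ u ∈ S, cNum G (flipSet π {v}) u ^ 2 + c ≤ ∑ u ∈ S, cNum G π u ^ 2 := by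
    calc ∑ u ∈ S, cNum G (flipSet π {v}) u ^ 2 + c
        = ∑ u ∈ S, (cNum G (flipSet π {v}) u ^ 2 + 1) := by
          rw [sum_add_distrib, sum_const, smul_eq_mul, mul_one]; rfl
      _ ≤ ∑ u ∈ S, cNum G π u ^ 2 := sum_le_sum fun u hu => by
          rw [← cNum_flipSet_singleton_of_conflict (mem_conflictSet.mp hu), add_sq]
          omega
  have hT_le : ∑ u ∈ T, cNum G (flipSet π {v}) u ^ 2
      ≤ ∑ u ∈ T, cNum G π u ^ 2 + (2 * c + 1) * #T := by
    calc ∑ u ∈ T, cNum G (flipSet π {v}) u ^ 2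
        ≤ ∑ u ∈ T, (cNum G π u ^ 2 + (2 * c + 1)) := sum_le_sum fun u hu => by
          obtain ⟨hne, hnS⟩ := mem_sdiff.mp hu
          rw [cNum_flipSet_singleton_of_not_conflict (ne_of_mem_erase hne)
            fun h => hnS (mem_conflictSet.mpr h), add_sq]
          have := hmax u
          omega
      _ = ∑ u ∈ T, cNum G π u ^ 2 + (2 * c + 1) * #T := by
          rw [sum_add_distrib, sum_const, smul_eq_mul, mul_comm]
  have hc : c ^ 2 + c ≤ #T ^ 2 + (2 * c + 1) * #T := by
    rw [h2, h2, hsplit, hsplit (fun u => cNum G (flipSet π {v}) u ^ 2), hv] at hmin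
    linarith
  have hn : Fintype.card V = #T + c + 1 := by
    have := Fintype.card_pos_iff.mpr ⟨v⟩
    omega
  rw [hn, Nat.add_sub_cancel]
  nlinarith

end LocalMinimum

/-- Lemma 9: if `π` is a 2-partition with `h₂(π) ≤ h₂(π ⊖ v)` for every
vertex `v`, then `c_π(v) ≤ √(n(n−1)/2)` for every vertex `v`. -/
theorem cNum_le_of_flip_min_h2 (G : SimpleGraph V) [DecidableRel G.Adj] (π : V → Bool)
    (hmin : ∀ v : V, h2 G π ≤ h2 G (flipSet π {v})) :
    ∀ v : V, (cNum G π v : ℝ) ≤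
      Real.sqrt ((Fintype.card V : ℝ) * ((Fintype.card V : ℝ) - 1) / 2) := by
  intro v₀
  obtain ⟨v, -, hv⟩ := exists_max_image univ (cNum G π) ⟨v₀, mem_univ v₀⟩
  have hmax (u : V) : cNum G π u ≤ cNum G π v := hv u (mem_univ u)
  have hbound : 2 * (cNum G π v : ℝ) * (cNum G π v + 1)
      ≤ ((Fintype.card V : ℝ) - 1) * Fintype.card V := by
    have := two_mul_cNum_mul_succ_le_of_h2_le_flipSet (hmin v) hmax
    rw [← Nat.cast_pred (Fintype.card_pos_iff.mpr ⟨v⟩)]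
    exact_mod_cast this
  have hv₀ : (cNum G π v₀ : ℝ) ≤ cNum G π v := by exact_mod_cast hmax v₀
  apply Real.le_sqrt_of_sq_le
  nlinarith [(cNum G π v₀).cast_nonneg (α := ℝ)]
end

section
/- Let φ = (1+√5)/2, let p₁ > 0, and let T : ℕ×ℕ → ℝ satisfy T(a,b) ≤ T(a−1,b) + T(a−1,b−1) + p₁·a for all a,b ≥ 1, T(a,0) ≤ p₁·a for all a, and T(0,b) ≤ p₁ for all b. Then there exists a constant p₂ > 0 such that T(a,b) ≤ p₂·φ^{a+b} − p₁·(a+2) for all a,b ∈ ℕ; in particular T(a,b) ∈ O(φ^{a+b}). -/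
/-!
The majorant `U(a,b) = 3 p₁ φ^(a+b) - p₁ (a+2)` satisfies the recurrence of `T` with
equality, because `φ^(n+2) = φ^(n+1) + φ^n` and the linear parts add up to `p₁ (a+1)`.
Since `T` satisfies it as an inequality, `T ≤ U` propagates from the boundary `a = 0`, `b = 0`
by induction on `a`. On the boundary it reduces to `φ^b ≥ 1` and to `2a + 2 ≤ 3 φ^a`.
-/

open Real goldenRatio

theorem le_of_boundary_of_recurrence {T U : ℕ × ℕ → ℝ} (f : ℕ → ℝ)
    (hT : ∀ a b : ℕ, T (a + 1, b + 1) ≤ T (a, b + 1) + T (a, b) + f a)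
    (hU : ∀ a b : ℕ, U (a, b + 1) + U (a, b) + f a ≤ U (a + 1, b + 1))
    (h_left : ∀ b : ℕ, T (0, b) ≤ U (0, b)) (h_bottom : ∀ a : ℕ, T (a, 0) ≤ U (a, 0)) :
    ∀ a b : ℕ, T (a, b) ≤ U (a, b) := by
  intro a
  induction a with
  | zero => exact h_left
  | succ a ih =>
    rintro (_ | b)
    · exact h_bottom _
    · linarith [hT a b, hU a b, ih b, ih (b + 1)]

theorem two_mul_add_two_le_three_mul_goldenRatio_pow (n : ℕ) :
    2 * (n : ℝ) + 2 ≤ 3 * φ ^ n := by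
  induction n using Nat.twoStepInduction with
  | zero => norm_num
  | one =>
    norm_num
    -- `φ > 3/2`, since `(2 - φ)(φ - 1) = 2φ - 3` by `φ² = φ + 1`
    nlinarith [goldenRatio_sq,
      mul_pos (sub_pos.2 goldenRatio_lt_two) (sub_pos.2 one_lt_goldenRatio)]
  | more n ih₀ ih₁ =>
    push_cast at ih₁ ⊢
    linarith [goldenRatio_pow_sub_goldenRatio_pow n, n.cast_nonneg (α := ℝ)]

/-- Lemma 10: if `T : ℕ×ℕ → ℝ` satisfies
`T(a,b) ≤ T(a−1,b) + T(a−1,b−1) + p₁·a` for `a,b ≥ 1`, `T(a,0) ≤ p₁·a` and `T(0,b) ≤ p₁`,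
then there is a constant `p₂ > 0` with `T(a,b) ≤ p₂·φ^(a+b) − p₁·(a+2)` for all `a,b`,
where `φ = (1+√5)/2`; in particular `T(a,b) ∈ O(φ^(a+b))`. -/
theorem searchTree_time_bound (p₁ : ℝ) (hp₁ : 0 < p₁) (T : ℕ × ℕ → ℝ)
    (hrec : ∀ a b : ℕ, T (a + 1, b + 1) ≤ T (a, b + 1) + T (a, b) + p₁ * (a + 1))
    (ha0 : ∀ a : ℕ, T (a, 0) ≤ p₁ * a)
    (hb0 : ∀ b : ℕ, T (0, b) ≤ p₁) :
    ∃ p₂ : ℝ, 0 < p₂ ∧ ∀ a b : ℕ,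
      T (a, b) ≤ p₂ * ((1 + Real.sqrt 5) / 2) ^ (a + b) - p₁ * (a + 2) := by
  refine ⟨3 * p₁, by positivity, ?_⟩
  refine le_of_boundary_of_recurrence
    (U := fun x ↦ 3 * p₁ * φ ^ (x.1 + x.2) - p₁ * (x.1 + 2)) (fun a ↦ p₁ * (a + 1)) hrec
    ?_ (fun b ↦ ?_) (fun a ↦ ?_)
  · intro a b
    have hφ : φ ^ (a + 1 + (b + 1)) = φ ^ (a + (b + 1)) + φ ^ (a + b) := by
      rw [show a + 1 + (b + 1) = a + b + 2 by ring, show a + (b + 1) = a + b + 1 by ring]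
      linarith [goldenRatio_pow_sub_goldenRatio_pow (a + b)]
    push_cast
    linear_combination (-3 * p₁) * hφ
  · have hpow : p₁ * 1 ≤ p₁ * φ ^ b :=
      mul_le_mul_of_nonneg_left (one_le_pow₀ one_lt_goldenRatio.le) hp₁.le
    simp only [zero_add, Nat.cast_zero]
    linarith [hb0 b]
  · have hpow : p₁ * (2 * a + 2) ≤ p₁ * (3 * φ ^ a) :=
      mul_le_mul_of_nonneg_left (two_mul_add_two_le_three_mul_goldenRatio_pow a) hp₁.le
    simp only [add_zero]
    linarith [ha0 a]
end
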